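/- Fix an integer n ≥ 1 and let B = −Δ_N be (the matrix of) the negative discrete Neumann Laplacian on {0,…,n}, with entries B_{x,y} = ⟨−Δ_N δ_x, δ_y⟩. Then for all x, y ∈ {0,…,n}: δ_{x,y} (B²)_{x,y} − (B_{x,y})² = B_{x,y}. -/

import Mathlib

/-!
The identity holds for every symmetric matrix `B` with zero row sums and off-diagonal entries
in `{0, -1}` (a graph Laplacian), and `-Δ_N` is one. Off the diagonal the identity is `B_xy² = -B_xy`. On the
diagonal, symmetry gives `(B²)_xx = ∑_z B_xz²`, and `B_xz² = -B_xz` for `z ≠ x` together with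
`∑_z B_xz = 0` turns this into `B_xx² + B_xx`.
-/

open Real Matrix

noncomputable section

/-- The matrix of the discrete Neumann Laplacian `Δ_N` on `{0,…,n}`:
`(Δ_N f)_x = f_{x+1} + f_{x−1} − 2 f_x` with the conventions `f_{−1} := f₀`, `f_{n+1} := f_n`. -/
def neumannLapMat (n : ℕ) : Matrix (Fin (n + 1)) (Fin (n + 1)) ℝ := fun x y =>
  (if (x : ℕ) = n then (if y = x then (1 : ℝ) else 0)
    else (if (y : ℕ) = (x : ℕ) + 1 then 1 else 0))
  + (if (x : ℕ) = 0 then (if y = x then 1 else 0)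
    else (if (y : ℕ) + 1 = (x : ℕ) then 1 else 0))
  - 2 * (if y = x then 1 else 0)

namespace Matrix.IsSymm

variable {ι R : Type*} [Fintype ι] [DecidableEq ι] [CommRing R] {B : Matrix ι ι R}

theorem mul_self_apply_self_eq_sq_add (hB : B.IsSymm) (hrow : ∀ x, ∑ y, B x y = 0)
    (hoff : ∀ x y, x ≠ y → B x y ^ 2 = -B x y) (x : ι) :
    (B * B) x x = B x x ^ 2 + B x x := by
  have hterm : ∀ z, B x z ^ 2 + B x z = if x = z then B x x ^ 2 + B x x else 0 := by
    intro z
    split_ifs with hxz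
    · rw [hxz]
    · rw [hoff x z hxz, neg_add_cancel]
  calc (B * B) x x = ∑ z, B x z ^ 2 := by
        rw [Matrix.mul_apply]
        exact Finset.sum_congr rfl fun z _ => by rw [hB.apply x z, sq]
    _ = ∑ z, (B x z ^ 2 + B x z) := by
        rw [Finset.sum_add_distrib, hrow, add_zero]
    _ = B x x ^ 2 + B x x := by
        rw [Finset.sum_congr rfl fun z _ => hterm z, Finset.sum_ite_eq, if_pos (Finset.mem_univ x)]

theorem ite_mul_mul_self_apply_sub_sq (hB : B.IsSymm) (hrow : ∀ x, ∑ y, B x y = 0)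
    (hoff : ∀ x y, x ≠ y → B x y ^ 2 = -B x y) (x y : ι) :
    (if x = y then (1 : R) else 0) * (B * B) x y - B x y ^ 2 = B x y := by
  rcases eq_or_ne x y with rfl | hxy
  · rw [if_pos rfl, one_mul, hB.mul_self_apply_self_eq_sq_add hrow hoff, add_sub_cancel_left]
  · rw [if_neg hxy, zero_mul, zero_sub, hoff x y hxy, neg_neg]

end Matrix.IsSymm

-- The reflecting boundary conditions make the two neighbours of `x` the points `min (x + 1) n`
-- and `x - 1`, with truncated subtraction supplying `0 - 1 = 0`.
theorem neumannLapMat_apply (n : ℕ) (x y : Fin (n + 1)) :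
    neumannLapMat n x y = (if (y : ℕ) = min ((x : ℕ) + 1) n then 1 else 0)
      + (if (y : ℕ) = (x : ℕ) - 1 then 1 else 0) - 2 * (if y = x then 1 else 0) := by
  simp only [neumannLapMat, Fin.ext_iff]
  split_ifs <;> first | omega | norm_num

theorem Fin.sum_ite_val_eq {R : Type*} [AddCommMonoidWithOne R] {n m : ℕ} (hm : m < n) :
    ∑ y : Fin n, (if (y : ℕ) = m then (1 : R) else 0) = 1 := by
  have hval : ∀ y : Fin n, ((y : ℕ) = m) = (y = ⟨m, hm⟩) := fun y => by rw [Fin.ext_iff]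
  simp only [hval, Finset.sum_ite_eq', Finset.mem_univ, if_true]

theorem sum_neumannLapMat_apply (n : ℕ) (x : Fin (n + 1)) : ∑ y, neumannLapMat n x y = 0 := by
  simp only [neumannLapMat_apply, Finset.sum_sub_distrib, Finset.sum_add_distrib,
    ← Finset.mul_sum, Finset.sum_ite_eq', Finset.mem_univ, if_true]
  rw [Fin.sum_ite_val_eq (by omega), Fin.sum_ite_val_eq (by omega)]
  norm_num

theorem isSymm_neumannLapMat (n : ℕ) : (neumannLapMat n).IsSymm := by
  ext x y
  simp only [transpose_apply, neumannLapMat_apply, Fin.ext_iff]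
  split_ifs <;> first | omega | norm_num

theorem neumannLapMat_apply_sq_of_ne (n : ℕ) {x y : Fin (n + 1)} (hxy : x ≠ y) :
    neumannLapMat n x y ^ 2 = neumannLapMat n x y := by
  simp only [neumannLapMat_apply, if_neg hxy.symm]
  split_ifs <;> first | omega | norm_num

theorem negNeumannLap_square_identity_general (n : ℕ) (x y : Fin (n + 1)) :
    (if x = y then (1 : ℝ) else 0) * ((-neumannLapMat n) * (-neumannLapMat n)) x y
        - ((-neumannLapMat n) x y) ^ 2
      = (-neumannLapMat n) x y := by
  refine (isSymm_neumannLapMat n).neg.ite_mul_mul_self_apply_sub_sq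
    (fun x => ?_) (fun x y hxy => ?_) x y
  · simp only [Matrix.neg_apply, Finset.sum_neg_distrib, sum_neumannLapMat_apply, neg_zero]
  · rw [Matrix.neg_apply, neg_sq, neg_neg, neumannLapMat_apply_sq_of_ne n hxy]

/-- For `B = −Δ_N` one has
`δ_{x,y}(B²)_{x,y} − (B_{x,y})² = B_{x,y}` for all `x, y ∈ {0,…,n}`. -/
theorem negNeumannLap_square_identity (n : ℕ) (hn : 1 ≤ n) (x y : Fin (n + 1)) :
    (if x = y then (1 : ℝ) else 0) * ((-neumannLapMat n) * (-neumannLapMat n)) x y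
        - ((-neumannLapMat n) x y) ^ 2
      = (-neumannLapMat n) x y :=
  negNeumannLap_square_identity_general n x y

end
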